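/- Soundness of the generator: for every ground type t and type substitution σ, every value v produced by the (non-deterministic) generation procedure gen(t, σ) satisfies typeof(v) = t, where holes generated for polymorphic positions are counted at their assigned hole type. -/

import Mathlib

/-- Types: t ::= Int | Bool | t × t | Tree t | Fun | α (type hole). -/
inductive Ty : Type where
  | int : Ty
  | bool : Ty
  | fn : Ty
  | prod (t₁ t₂ : Ty) : Ty
  | tree (t : Ty) : Ty
  | hole (α : ℕ) : Ty
deriving DecidableEq

/-- A type substitution: a (partial) map from type holes to types. -/
abbrev TSub := ℕ → Option Ty

/-- Homomorphic application of a type substitution. -/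
def Ty.subst (θ : TSub) : Ty → Ty
  | .int => .int
  | .bool => .bool
  | .fn => .fn
  | .prod t₁ t₂ => .prod (t₁.subst θ) (t₂.subst θ)
  | .tree t => .tree (t.subst θ)
  | .hole α => (θ α).getD (.hole α)

/-- s ∼ t : some substitution maps both to the same type. -/
def Compatible (s t : Ty) : Prop := ∃ θ : TSub, s.subst θ = t.subst θ

/-- s ⊑ t : some substitution maps t to s. -/
def Refines (s t : Ty) : Prop := ∃ θ : TSub, s = t.subst θ

/-- Ground types contain no type holes. -/
def Ty.Ground : Ty → Prop
  | .int => True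
  | .bool => True
  | .fn => True
  | .prod t₁ t₂ => t₁.Ground ∧ t₂.Ground
  | .tree t => t.Ground
  | .hole _ => False

/-- The set of type holes occurring in a type. -/
def Ty.holes : Ty → Set ℕ
  | .int => ∅
  | .bool => ∅
  | .fn => ∅
  | .prod t₁ t₂ => t₁.holes ∪ t₂.holes
  | .tree t => t.holes
  | .hole α => {α}

mutual
/-- Expressions of the calculus (with holes embedded via values). -/
inductive Expr : Type where
  | var (x : ℕ) : Expr
  | val (v : Val) : Expr
  | plus (e₁ e₂ : Expr) : Expr
  | ite (e₁ e₂ e₃ : Expr) : Expr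
  | app (e₁ e₂ : Expr) : Expr
  | pair (e₁ e₂ : Expr) : Expr
  | node (t : Ty) (e₁ e₂ e₃ : Expr) : Expr

/-- Values: n | b | λx.e | (v,v) | Leaf t | Node t v v v | ν[α] (hole). -/
inductive Val : Type where
  | int (n : ℤ) : Val
  | bool (b : Bool) : Val
  | lam (x : ℕ) (e : Expr) : Val
  | pair (v₁ v₂ : Val) : Val
  | leaf (t : Ty) : Val
  | node (t : Ty) (v₁ v₂ v₃ : Val) : Val
  | hole (ν α : ℕ) : Val
end

/-- The dynamic type of a value. -/
def typeof : Val → Ty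
  | .int _ => .int
  | .bool _ => .bool
  | .lam _ _ => .fn
  | .pair v₁ v₂ => .prod (typeof v₁) (typeof v₂)
  | .leaf t => .tree t
  | .node t _ _ _ => .tree t
  | .hole _ α => .hole α

/-- A value substitution: a (partial) map from value holes to values. -/
abbrev VSubst := ℕ → Option Val

/-- The non-deterministic generation procedure gen(t, σ), as a relation. -/
inductive Gen (σ : TSub) : Ty → Val → Prop where
  | int (n : ℤ) : Gen σ .int (.int n)
  | bool (b : Bool) : Gen σ .bool (.bool b)
  | prod {t₁ t₂ v₁ v₂} : Gen σ t₁ v₁ → Gen σ t₂ v₂ →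
      Gen σ (.prod t₁ t₂) (.pair v₁ v₂)
  | leaf (t : Ty) : Gen σ (.tree t) (.leaf t)
  | node {t v₁ v₂ v₃} : Gen σ t v₁ → Gen σ (.tree t) v₂ → Gen σ (.tree t) v₃ →
      Gen σ (.tree t) (.node t v₁ v₂ v₃)
  | fn (x ν α : ℕ) : Gen σ .fn (.lam x (.val (.hole ν α)))
  | holeBound {α t v} : σ α = some t → Gen σ t v → Gen σ (.hole α) v
  | holeFree {α} (ν : ℕ) : σ α = none → Gen σ (.hole α) (.hole ν α)

/-- Soundness of the generator: every value produced by
gen(t, σ) at a ground type t has dynamic type t (holes being counted at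
their assigned hole type). -/
theorem gen_sound (σ : TSub) (t : Ty) (v : Val)
    (ht : t.Ground) (h : Gen σ t v) : typeof v = t := by
  induction h with
  | prod _ _ ih₁ ih₂ => exact congrArg₂ Ty.prod (ih₁ ht.1) (ih₂ ht.2)
  | holeBound | holeFree => exact (ht : False).elim
  | _ => rfl
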